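/- Let η ∈ F₈ satisfy η³ = η + 1. The stabilizer in GL(3, F₂) of the point [1:η:0] ∈ ℙ²(F₈) (under the action via the entrywise inclusion F₂ ↪ F₈) has order 4, and every element of this stabilizer has order dividing 2 (i.e., it is elementary abelian of order 4). -/
import Mathlib


noncomputable section

abbrev F₂ : Type := ZMod 2
abbrev F₈ : Type := GaloisField 2 3

/-- The projective plane over `F₈`. -/
abbrev ProjPlane : Type := Projectivization F₈ (Fin 3 → F₈)

/-- `GL(3, F₂)` mapped into the group of `F₈`-linear automorphisms of `F₈³`,
via the entrywise inclusion `F₂ ↪ F₈`. -/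
def actHom : GL (Fin 3) F₂ →* ((Fin 3 → F₈) ≃ₗ[F₈] (Fin 3 → F₈)) :=
  ((LinearMap.GeneralLinearGroup.generalLinearEquiv F₈ (Fin 3 → F₈)).toMonoidHom.comp
      (Matrix.GeneralLinearGroup.toLin (n := Fin 3) (R := F₈)).toMonoidHom).comp
    (Units.map ((algebraMap F₂ F₈).mapMatrix).toMonoidHom)

/-- The action of `GL(3, F₂)` on the projective plane `ℙ²(F₈)`. -/
instance : MulAction (GL (Fin 3) F₂) ProjPlane where
  smul g p := p.map (actHom g).toLinearMap (actHom g).injective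
  one_smul p := by
    show p.map (actHom 1).toLinearMap (actHom 1).injective = p
    simp only [map_one]
    exact congrFun Projectivization.map_id p
  mul_smul g h p := by
    show p.map (actHom (g * h)).toLinearMap (actHom (g * h)).injective = _
    simp only [map_mul]
    exact congrFun (Projectivization.map_comp (actHom h).toLinearMap (actHom h).injective
      (actHom g).toLinearMap (actHom g).injective) p

/-- A triple with nonzero first coordinate is a nonzero vector. -/
theorem vec_ne_zero (a b c : F₈) (ha : a ≠ 0) : ![a, b, c] ≠ 0 :=
  fun h => ha (by simpa using congrFun h 0)

lemma zmod2_cases : ∀ x : F₂, x = 0 ∨ x = 1 := by decide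
lemma zmod2_ne_zero : ∀ x : F₂, x ≠ 0 → x = 1 := by decide

lemma indep (η : F₈) (hη : η ^ 3 = η + 1) (a b c : F₂)
    (h : algebraMap F₂ F₈ a + algebraMap F₂ F₈ b * η + algebraMap F₂ F₈ c * η ^ 2 = 0) :
    a = 0 ∧ b = 0 ∧ c = 0 := by
  have h2 : (2:F₈) = 0 := by exact_mod_cast CharP.cast_eq_zero F₈ 2
  rcases zmod2_cases a with rfl | rfl <;> rcases zmod2_cases b with rfl | rfl <;>
    rcases zmod2_cases c with rfl | rfl <;>
    simp only [map_one, map_zero, one_mul, zero_mul, add_zero, zero_add] at h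
  · exact ⟨rfl, rfl, rfl⟩
  · exact absurd (show (1:F₈) = 0 by linear_combination (-η^2+η+1)*h + (η-1)*hη) one_ne_zero
  · exact absurd (show (1:F₈) = 0 by linear_combination (η^2-1)*h - hη) one_ne_zero
  · exact absurd (show (1:F₈) = 0 by linear_combination (η-1)*h - hη) one_ne_zero
  · exact absurd (show (1:F₈) = 0 by linear_combination h) one_ne_zero
  · exact absurd (show (1:F₈) = 0 by
      linear_combination (4 + η - 2*η^2)*h + (2*η-1)*hη - 2*h2) one_ne_zero
  · exact absurd (show (1:F₈) = 0 by linear_combination (η^2-η)*h - hη) one_ne_zero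
  · exact absurd (show (1:F₈) = 0 by linear_combination (2-η^2)*h + (1+η)*hη) one_ne_zero

lemma mem_stab_iff (η : F₈) (hη : η ^ 3 = η + 1) (g : GL (Fin 3) F₂) :
    g ∈ MulAction.stabilizer (GL (Fin 3) F₂)
        (Projectivization.mk F₈ ![1, η, 0] (vec_ne_zero 1 η 0 one_ne_zero)) ↔
      (g : Matrix (Fin 3) (Fin 3) F₂) 0 0 = 1 ∧ (g : Matrix (Fin 3) (Fin 3) F₂) 0 1 = 0 ∧
      (g : Matrix (Fin 3) (Fin 3) F₂) 1 0 = 0 ∧ (g : Matrix (Fin 3) (Fin 3) F₂) 1 1 = 1 ∧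
      (g : Matrix (Fin 3) (Fin 3) F₂) 2 0 = 0 ∧ (g : Matrix (Fin 3) (Fin 3) F₂) 2 1 = 0 ∧
      (g : Matrix (Fin 3) (Fin 3) F₂) 2 2 = 1 := by
  set M : Matrix (Fin 3) (Fin 3) F₂ := (g : Matrix (Fin 3) (Fin 3) F₂) with hM
  set f : F₂ →+* F₈ := algebraMap F₂ F₈ with hf
  have hv : (![1, η, 0] : Fin 3 → F₈) ≠ 0 := vec_ne_zero 1 η 0 one_ne_zero
  have hsmul : g • Projectivization.mk F₈ ![1, η, 0] hv =
      Projectivization.mk F₈ ((actHom g).toLinearMap ![1, η, 0])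
        (by rw [show (0 : Fin 3 → F₈) = (actHom g).toLinearMap 0 by simp]
            exact fun h => hv ((actHom g).injective h)) := rfl
  rw [MulAction.mem_stabilizer_iff, hsmul, Projectivization.mk_eq_mk_iff]
  have happ : ∀ i, (actHom g).toLinearMap ![1, η, 0] i = f (M i 0) + f (M i 1) * η := by
    intro i
    show Matrix.mulVec (M.map f) ![1, η, 0] i = _
    simp [Matrix.mulVec, dotProduct, Fin.sum_univ_three, Matrix.map_apply,
      Matrix.vecHead, Matrix.vecTail]
  constructor
  · rintro ⟨u, hu⟩
    have h0 := congrFun hu 0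
    have h1 := congrFun hu 1
    have h2 := congrFun hu 2
    rw [happ 0] at h0; rw [happ 1] at h1; rw [happ 2] at h2
    simp only [Pi.smul_apply, Matrix.cons_val_zero, Matrix.cons_val_one, Matrix.head_cons,
      Units.smul_def, smul_eq_mul, mul_one, mul_zero,
      Matrix.cons_val_two, Matrix.tail_cons] at h0 h1 h2
    obtain ⟨e20, e21, -⟩ := indep η hη (M 2 0) (M 2 1) 0
      (by simp only [map_zero, zero_mul, add_zero]; linear_combination -h2)
    obtain ⟨e10, e11, e01⟩ := indep η hη (M 1 0) (M 1 1 - M 0 0) (-(M 0 1))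
      (by simp only [map_sub, map_neg]; linear_combination η * h0 - h1)
    have e01' : M 0 1 = 0 := by rwa [neg_eq_zero] at e01
    have e00 : M 0 0 = 1 := by
      apply zmod2_ne_zero
      intro h00
      apply u.ne_zero
      rw [h0, h00, e01', map_zero, zero_mul, add_zero]
    have e11' : M 1 1 = 1 := by rw [sub_eq_zero] at e11; rw [e11, e00]
    have hdet : M.det = M 2 2 := by
      rw [Matrix.det_fin_three, e00, e01', e10, e11', e20, e21]; ring
    have hunit : IsUnit M.det := (Matrix.isUnit_iff_isUnit_det M).mp ⟨g, rfl⟩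
    have e22 : M 2 2 = 1 := zmod2_ne_zero _ (by rw [← hdet]; exact hunit.ne_zero)
    exact ⟨e00, e01', e10, e11', e20, e21, e22⟩
  · rintro ⟨e00, e01, e10, e11, e20, e21, -⟩
    refine ⟨1, funext fun i => ?_⟩
    rw [happ i]
    fin_cases i <;>
      simp [e00, e01, e10, e11, e20, e21]

lemma zmod2_add_self : ∀ x : F₂, x + x = 0 := by decide

def Umat (x y : F₂) : Matrix (Fin 3) (Fin 3) F₂ := !![1,0,x;0,1,y;0,0,1]

lemma Umat_sq (x y : F₂) : Umat x y * Umat x y = 1 := by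
  ext i j
  fin_cases i <;> fin_cases j <;>
    simp [Umat, Matrix.mul_apply, Fin.sum_univ_three, zmod2_add_self,
      Matrix.vecHead, Matrix.vecTail, Matrix.one_apply]

def Ugl (x y : F₂) : GL (Fin 3) F₂ := ⟨Umat x y, Umat x y, Umat_sq x y, Umat_sq x y⟩

/-- The stabilizer in `GL(3,F₂)` of the point `[1:η:0] ∈ ℙ²(F₈)` is elementary abelian
of order `4`: it has order `4` and every element has order dividing `2`. -/
theorem GL3F2_stabilizer_of_1_eta_0_is_elementary_abelian_of_order_4
    (η : F₈) (hη : η ^ 3 = η + 1)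
    (p : ProjPlane)
    (hp : p = Projectivization.mk F₈ ![1, η, 0] (vec_ne_zero 1 η 0 one_ne_zero)) :
    Nat.card (MulAction.stabilizer (GL (Fin 3) F₂) p) = 4 ∧
    ∀ x : MulAction.stabilizer (GL (Fin 3) F₂) p, x ^ 2 = 1 := by
  subst hp
  have hsq : ∀ x : MulAction.stabilizer (GL (Fin 3) F₂)
      (Projectivization.mk F₈ ![1, η, 0] (vec_ne_zero 1 η 0 one_ne_zero)), x ^ 2 = 1 := by
    rintro ⟨x, hx⟩
    obtain ⟨e00, e01, e10, e11, e20, e21, e22⟩ := (mem_stab_iff η hη x).mp hx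
    have : x * x = 1 := by
      apply Units.ext
      show (x : Matrix (Fin 3) (Fin 3) F₂) * x = 1
      ext i j
      fin_cases i <;> fin_cases j <;>
        simp [Matrix.mul_apply, Fin.sum_univ_three, e00, e01, e10, e11, e20, e21, e22,
          zmod2_add_self, Matrix.one_apply]
    exact Subtype.ext (by rw [Subgroup.coe_pow, Subgroup.coe_one, sq, this])
  refine ⟨?_, hsq⟩
  have e : MulAction.stabilizer (GL (Fin 3) F₂)
      (Projectivization.mk F₈ ![1, η, 0] (vec_ne_zero 1 η 0 one_ne_zero)) ≃ F₂ × F₂ :=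
    { toFun := fun s => (((s : GL (Fin 3) F₂) : Matrix (Fin 3) (Fin 3) F₂) 0 2,
        ((s : GL (Fin 3) F₂) : Matrix (Fin 3) (Fin 3) F₂) 1 2)
      invFun := fun xy => ⟨Ugl xy.1 xy.2, by
        rw [mem_stab_iff η hη]
        refine ⟨?_, ?_, ?_, ?_, ?_, ?_, ?_⟩ <;>
          simp [Ugl, Umat, Matrix.vecHead, Matrix.vecTail]⟩
      left_inv := by
        rintro ⟨x, hx⟩
        obtain ⟨e00, e01, e10, e11, e20, e21, e22⟩ := (mem_stab_iff η hη x).mp hx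
        apply Subtype.ext
        apply Units.ext
        show (Ugl _ _ : Matrix (Fin 3) (Fin 3) F₂) = (x : Matrix (Fin 3) (Fin 3) F₂)
        ext i j
        fin_cases i <;> fin_cases j <;>
          simp [Ugl, Umat, Matrix.vecHead, Matrix.vecTail, e00, e01, e10, e11, e20, e21, e22]
      right_inv := by
        rintro ⟨x, y⟩
        simp [Ugl, Umat, Matrix.vecHead, Matrix.vecTail] }
  rw [Nat.card_congr e, Nat.card_prod, Nat.card_eq_fintype_card]
  rfl


end
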